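/- arXiv:2010.02536 — 9 statements merged into one kernel-verified Lean document; each statement's English description precedes it below -/
import Mathlib

section
/- Let Γ be a group acting by homeomorphisms on a compact Hausdorff space X. Then every point x ∈ X whose stabilizer equals its open stabilizer (Γ_x = Γ_x⁰) is a continuity point of the open-stabilizer map, i.e. {x ∈ X : Γ_x = Γ_x⁰} ⊆ X₀⁰. (Proposition 2.1(iii)) -/
open Filter Topology

/-- Proposition 2.1(iii): every point whose stabilizer equals its open stabilizer is a
continuity point of the open-stabilizer map. -/
theorem stabilizer_eq_openStabilizer_subset_continuityPoints
    {G X : Type*} [Group G] [TopologicalSpace X] [CompactSpace X] [T2Space X]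
    [MulAction G X] [ContinuousConstSMul G X] :
    {x : X | {g : G | g • x = x} = {g : G | x ∈ interior {z : X | g • z = z}}} ⊆
      {x : X | ∀ g : G, ∀ᶠ y in 𝓝 x,
        (y ∈ interior {z : X | g • z = z} ↔ x ∈ interior {z : X | g • z = z})} := by
  intro x hx g
  by_cases h : x ∈ interior {z : X | g • z = z}
  · filter_upwards [isOpen_interior.mem_nhds h] with y hy
    simp [hy, h]
  · have hgx : g • x ≠ x := by
      intro he
      have hmem : g ∈ {g : G | g • x = x} := he
      rw [hx] at hmem
      exact h hmem
    have hcl : IsClosed {z : X | g • z = z} :=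
      isClosed_eq (continuous_const_smul g) continuous_id
    have hxmem : x ∈ ({z : X | g • z = z})ᶜ := hgx
    filter_upwards [hcl.isOpen_compl.mem_nhds hxmem] with y hy
    have : y ∉ interior {z : X | g • z = z} := fun hi => hy (interior_subset hi)
    simp [this, h]
end

section
/- Let Γ be a group acting by homeomorphisms on a compact Hausdorff space X. Then X₀⁰ = X if and only if interior(X^g) is a closed subset of X for every g ∈ Γ. (Proposition 2.1(iv); when these equivalent conditions hold the action is said to have Hausdorff germs.) -/
open Filter Topology

/-- Proposition 2.1(iv): every point of `X` is a continuity point of the open-stabilizer map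
iff `interior X^g` is closed for every `g` (i.e. the action has Hausdorff germs). -/
theorem continuityPoints_eq_univ_iff_interior_fixedSet_closed
    {G X : Type*} [Group G] [TopologicalSpace X] [CompactSpace X] [T2Space X]
    [MulAction G X] [ContinuousConstSMul G X] :
    (∀ x : X, ∀ g : G, ∀ᶠ y in 𝓝 x,
        (y ∈ interior {z : X | g • z = z} ↔ x ∈ interior {z : X | g • z = z})) ↔
      ∀ g : G, IsClosed (interior {z : X | g • z = z}) := by
  constructor
  · intro h g
    rw [← isOpen_compl_iff]
    rw [isOpen_iff_mem_nhds]
    intro x hx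
    filter_upwards [h x g] with y hy
    intro hyU
    exact hx (hy.mp hyU)
  · intro h x g
    by_cases hx : x ∈ interior {z : X | g • z = z}
    · filter_upwards [isOpen_interior.mem_nhds hx] with y hy
      exact ⟨fun _ => hx, fun _ => hy⟩
    · filter_upwards [(h g).isOpen_compl.mem_nhds hx] with y hy
      exact ⟨fun h' => absurd h' hy, fun h' => absurd h' hx⟩
end

section
/- Let Γ be a group acting by homeomorphisms on two nonempty compact Hausdorff spaces Y and X, and suppose both actions are minimal. Let π : Y → X be a continuous Γ-equivariant map. Then for every subset U ⊆ Y with nonempty interior, the image π(U) has nonempty interior in X. (Lemma 3.2, a continuous equivariant map between minimal compact Γ-spaces sends sets of nonempty interior to sets of nonempty interior.) -/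
/-!
Pick a compact `K ⊆ U` with nonempty interior. By minimality of `Y` and compactness, finitely
many translates `g • interior K` cover `Y`. Minimality of `X` makes `π` surjective, so finitely
many translates of the closed set `π '' K` cover `X`. A finite union of closed sets with empty
interior has empty interior, so `π '' K`, hence `π '' U`, has nonempty interior.
-/

open Set Function MulAction Pointwise

section

variable {X : Type*} [TopologicalSpace X]

theorem interior_biUnion_finset_eq_empty_of_isClosed {ι : Type*} (I : Finset ι)
    {s : ι → Set X} (hs : ∀ i ∈ I, IsClosed (s i)) (h : ∀ i ∈ I, interior (s i) = ∅) :
    interior (⋃ i ∈ I, s i) = ∅ := by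
  classical
  induction I using Finset.induction_on with
  | empty => simp
  | insert a I _ ih =>
    rw [Finset.set_biUnion_insert,
      interior_union_isClosed_of_interior_empty (hs a (Finset.mem_insert_self a I))
        (ih (fun i hi => hs i (Finset.mem_insert_of_mem hi))
          (fun i hi => h i (Finset.mem_insert_of_mem hi)))]
    exact h a (Finset.mem_insert_self a I)

variable {G : Type*} [Group G] [MulAction G X] [ContinuousConstSMul G X]

theorem MulAction.isMinimal_of_isClosed_invariant
    (h : ∀ C : Set X, IsClosed C → (∀ g : G, ∀ x ∈ C, g • x ∈ C) → C = ∅ ∨ C = univ) :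
    IsMinimal G X :=
  (isMinimal_iff_isClosed_smul_invariant G).2 fun C hC hinv =>
    h C hC fun g _ hx => hinv g (smul_mem_smul_set hx)

theorem IsClosed.interior_nonempty_of_iUnion_smul_eq_univ [Nonempty X] {K : Set X}
    (hK : IsClosed K) {I : Finset G} (hcover : ⋃ g ∈ I, g • K = univ) :
    (interior K).Nonempty := by
  by_contra hempty
  rw [not_nonempty_iff_eq_empty] at hempty
  have := interior_biUnion_finset_eq_empty_of_isClosed I (fun g _ => hK.smul g)
    (fun g _ => by rw [interior_smul, hempty, smul_set_empty])
  rw [hcover, interior_univ] at this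
  exact univ_nonempty.ne_empty this

end

section

variable {G Y X : Type*} [Group G] [TopologicalSpace Y] [MulAction G Y] [MulAction G X]
  {π : Y → X}

theorem surjective_of_isMinimal [CompactSpace Y] [Nonempty Y] [TopologicalSpace X] [T2Space X]
    [IsMinimal G X]
    (hcont : Continuous π) (hequiv : ∀ (g : G) (y : Y), π (g • y) = g • π y) :
    Surjective π := by
  refine range_eq_univ.1 <|
    (eq_empty_or_univ_of_smul_invariant_closed G (isCompact_range hcont).isClosed ?_).resolve_left
      (range_nonempty π).ne_empty
  rintro g _ ⟨_, ⟨y, rfl⟩, rfl⟩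
  exact ⟨g • y, hequiv g y⟩

theorem exists_finset_iUnion_smul_image_eq_univ [CompactSpace Y] [IsMinimal G Y]
    [ContinuousConstSMul G Y] (hsurj : Surjective π)
    (hequiv : ∀ (g : G) (y : Y), π (g • y) = g • π y) {K : Set Y} (hK : (interior K).Nonempty) :
    ∃ I : Finset G, ⋃ g ∈ I, g • π '' K = univ := by
  obtain ⟨I, hI⟩ := isCompact_univ.exists_finite_cover_smul G isOpen_interior hK
  refine ⟨I, eq_univ_of_univ_subset ?_⟩
  calc univ = π '' univ := (image_univ_of_surjective hsurj).symm
    _ ⊆ π '' ⋃ g ∈ I, g • K :=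
      image_mono (hI.trans (iUnion₂_mono fun g _ => smul_set_mono interior_subset))
    _ = ⋃ g ∈ I, g • π '' K := by
      rw [image_iUnion₂]
      exact iUnion₂_congr fun g _ => Semiconj.set_image (hequiv g) K

end

theorem image_nonempty_interior_of_minimal_general
    {G Y X : Type*} [Group G]
    [TopologicalSpace Y] [CompactSpace Y] [T2Space Y]
    [MulAction G Y] [ContinuousConstSMul G Y]
    [TopologicalSpace X] [T2Space X]
    [MulAction G X] [ContinuousConstSMul G X]
    (hminY : ∀ C : Set Y, IsClosed C → (∀ g : G, ∀ y ∈ C, g • y ∈ C) →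
      C = ∅ ∨ C = Set.univ)
    (hminX : ∀ C : Set X, IsClosed C → (∀ g : G, ∀ x ∈ C, g • x ∈ C) →
      C = ∅ ∨ C = Set.univ)
    (π : Y → X) (hcont : Continuous π) (hequiv : ∀ (g : G) (y : Y), π (g • y) = g • π y)
    (U : Set Y) (hU : (interior U).Nonempty) :
    (interior (π '' U)).Nonempty := by
  have := isMinimal_of_isClosed_invariant hminY
  have := isMinimal_of_isClosed_invariant hminX
  obtain ⟨y₀, hy₀⟩ := hU
  have : Nonempty Y := ⟨y₀⟩
  have : Nonempty X := ⟨π y₀⟩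
  obtain ⟨K, hK, hy₀K, hKU⟩ := exists_compact_subset isOpen_interior hy₀
  obtain ⟨I, hI⟩ := exists_finset_iUnion_smul_image_eq_univ
    (surjective_of_isMinimal hcont hequiv) hequiv ⟨y₀, hy₀K⟩
  exact ((hK.image hcont).isClosed.interior_nonempty_of_iUnion_smul_eq_univ hI).mono
    (interior_mono (image_mono (hKU.trans interior_subset)))

/-- Lemma 3.2: a continuous equivariant map between minimal compact Γ-spaces sends sets of
nonempty interior to sets of nonempty interior. -/
theorem image_nonempty_interior_of_minimal
    {G Y X : Type*} [Group G]
    [TopologicalSpace Y] [CompactSpace Y] [T2Space Y] [Nonempty Y]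
    [MulAction G Y] [ContinuousConstSMul G Y]
    [TopologicalSpace X] [CompactSpace X] [T2Space X] [Nonempty X]
    [MulAction G X] [ContinuousConstSMul G X]
    (hminY : ∀ C : Set Y, IsClosed C → (∀ g : G, ∀ y ∈ C, g • y ∈ C) →
      C = ∅ ∨ C = Set.univ)
    (hminX : ∀ C : Set X, IsClosed C → (∀ g : G, ∀ x ∈ C, g • x ∈ C) →
      C = ∅ ∨ C = Set.univ)
    (π : Y → X) (hcont : Continuous π) (hequiv : ∀ (g : G) (y : Y), π (g • y) = g • π y)
    (U : Set Y) (hU : (interior U).Nonempty) :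
    (interior (π '' U)).Nonempty :=
  image_nonempty_interior_of_minimal_general hminY hminX π hcont hequiv U hU
end

section
/- Let Γ be a group acting by homeomorphisms on a nonempty compact Hausdorff space X (with its Borel σ-algebra), and let Λ be a subgroup of Γ. Then the following are equivalent: (1) there exists a Λ-invariant regular Borel probability measure on X; (2) there exists a unital, positive, Γ-equivariant linear map ψ : C(X,ℝ) → ℓ∞(Γ/Λ), where ℓ∞(Γ/Λ) denotes the space of bounded real-valued functions on the left coset space Γ/Λ. (This is the content of Proposition 3.9: Λ is a 𝒞-subgroup, i.e. there is a Γ-map from C(X) into B(ℓ²(Γ/Λ)), if and only if Λ fixes a probability measure on X; one direction is witnessed by the Poisson map P_ν(f)(gΛ) = ∫ f(g·x) dν(x).) -/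
/-!
One direction is the Poisson map `f ↦ (gΛ ↦ ∫ f (g • x) dν)`, well defined on cosets because `ν`
is `Λ`-invariant. Conversely, evaluating `ψ` at the trivial coset gives a state on `C(X, ℝ)`, i.e.
by Riesz–Markov–Kakutani a regular probability measure `ν`; equivariance of `ψ` makes this state
`Λ`-invariant, and a regular measure is determined by its integrals of continuous functions, so
`ν` itself is `Λ`-invariant.
-/

open MeasureTheory

/-- The action of `g : G` on a continuous function `f ∈ C(X, ℝ)`, i.e. `(g • f)(x) = f(g⁻¹ • x)`. -/
noncomputable def smulCont {G X : Type*} [Group G] [TopologicalSpace X] [MulAction G X]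
    [ContinuousConstSMul G X] (g : G) (f : C(X, ℝ)) : C(X, ℝ) :=
  f.comp ⟨fun x => g⁻¹ • x, continuous_const_smul _⟩

open scoped CompactlySupported

section RieszMarkovKakutani

variable {X : Type*} [TopologicalSpace X] [CompactSpace X] [T2Space X]
  [MeasurableSpace X] [BorelSpace X]

theorem exists_regular_probabilityMeasure_integral_eq (φ : C(X, ℝ) →ₚ[ℝ] ℝ) (hφ : φ 1 = 1) :
    ∃ ν : Measure X, IsProbabilityMeasure ν ∧ ν.Regular ∧ ∀ f : C(X, ℝ), ∫ x, f x ∂ν = φ f := by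
  let Λ : C_c(X, ℝ) →ₚ[ℝ] ℝ :=
    { toFun f := φ f.toContinuousMap
      map_add' f g := φ.map_add _ _
      map_smul' c f := φ.map_smul c _
      monotone' f g hfg := φ.monotone' hfg }
  have integral_eq (f : C(X, ℝ)) : ∫ x, f x ∂(RealRMK.rieszMeasure Λ) = φ f :=
    RealRMK.integral_rieszMeasure Λ (CompactlySupportedContinuousMap.continuousMapEquiv f)
  refine ⟨RealRMK.rieszMeasure Λ, ⟨?_⟩, inferInstance, integral_eq⟩
  have := integral_eq 1
  simp only [ContinuousMap.one_apply, integral_const, smul_eq_mul, mul_one, hφ] at this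
  rwa [measureReal_def, ENNReal.toReal_eq_one_iff] at this

end RieszMarkovKakutani

section Translation

variable {G X : Type*} [Group G] [TopologicalSpace X] [MulAction G X] [ContinuousConstSMul G X]

@[simp]
lemma smulCont_apply (g : G) (f : C(X, ℝ)) (x : X) : smulCont g f x = f (g⁻¹ • x) := rfl

variable [MeasurableSpace X] [BorelSpace X]

lemma integral_comp_smul_of_map_smul_eq {ν : Measure X} {l : G}
    (hl : Measure.map (l • ·) ν = ν) (f : X → ℝ) : ∫ x, f (l • x) ∂ν = ∫ x, f x ∂ν :=
  MeasurePreserving.integral_comp' (f := (Homeomorph.smul l).toMeasurableEquiv)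
    ⟨(continuous_const_smul l).measurable, hl⟩ f

lemma map_smul_eq_of_integral_comp_smul_eq [T2Space X] [LocallyCompactSpace X]
    {ν : Measure X} [ν.Regular] {l : G}
    (hl : ∀ f : C_c(X, ℝ), ∫ x, f (l • x) ∂ν = ∫ x, f x ∂ν) : Measure.map (l • ·) ν = ν := by
  have : (Measure.map (l • ·) ν).Regular := Measure.Regular.map (Homeomorph.smul l)
  refine Measure.ext_of_integral_eq_on_compactlySupported fun f => ?_
  rw [integral_map (continuous_const_smul l).aemeasurable (map_continuous f).aestronglyMeasurable]
  exact hl f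

end Translation

section PoissonMap

variable {G X : Type*} [Group G] [TopologicalSpace X] [CompactSpace X] [MulAction G X]
  [ContinuousConstSMul G X] [MeasurableSpace X] [BorelSpace X]
  (Λ : Subgroup G) (ν : Measure X) [IsFiniteMeasure ν]

lemma integrable_comp_smul (f : C(X, ℝ)) (g : G) : Integrable (fun x => f (g • x)) ν :=
  (f.continuous.comp (continuous_const_smul g)).integrable_of_hasCompactSupport
    (HasCompactSupport.of_compactSpace _)

/-- The Poisson map `P_ν f (gΛ) = ∫ f (g • x) dν(x)`. The coset representative is `Quotient.out`;
by `poissonMap_mk` the choice does not matter once `ν` is `Λ`-invariant. -/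
noncomputable def poissonMap : C(X, ℝ) →ₗ[ℝ] (G ⧸ Λ → ℝ) where
  toFun f q := ∫ x, f (q.out • x) ∂ν
  map_add' f₁ f₂ := funext fun q =>
    integral_add (integrable_comp_smul ν f₁ q.out) (integrable_comp_smul ν f₂ q.out)
  map_smul' c _ := funext fun _ => integral_smul c _

variable {Λ ν}

lemma poissonMap_mk (hν : ∀ l ∈ Λ, Measure.map (l • ·) ν = ν) (f : C(X, ℝ)) (g : G) :
    poissonMap Λ ν f g = ∫ x, f (g • x) ∂ν := by
  obtain ⟨l, hl⟩ := QuotientGroup.mk_out_eq_mul Λ g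
  show ∫ x, f ((g : G ⧸ Λ).out • x) ∂ν = _
  simp only [hl, mul_smul]
  exact integral_comp_smul_of_map_smul_eq (hν l l.2) fun x => f (g • x)

lemma poissonMap_smulCont (hν : ∀ l ∈ Λ, Measure.map (l • ·) ν = ν) (g : G) (f : C(X, ℝ))
    (q : G ⧸ Λ) : poissonMap Λ ν (smulCont g f) q = poissonMap Λ ν f (g⁻¹ • q) := by
  induction q using QuotientGroup.induction_on with
  | H k =>
    rw [MulAction.Quotient.smul_mk, poissonMap_mk hν, poissonMap_mk hν]
    simp only [smulCont_apply, smul_eq_mul, mul_smul]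

lemma poissonMap_one [IsProbabilityMeasure ν] : poissonMap Λ ν 1 = 1 :=
  funext fun q => by simp [poissonMap]

lemma poissonMap_nonneg {f : C(X, ℝ)} (hf : ∀ x, 0 ≤ f x) (q : G ⧸ Λ) :
    0 ≤ poissonMap Λ ν f q :=
  integral_nonneg fun _ => hf _

lemma abs_poissonMap_le (f : C(X, ℝ)) (q : G ⧸ Λ) :
    |poissonMap Λ ν f q| ≤ ‖f‖ * ν.real Set.univ :=
  norm_integral_le_of_norm_le_const (Filter.Eventually.of_forall fun _ => f.norm_coe_le_norm _)

end PoissonMap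

lemma QuotientGroup.smul_mk_one_of_mem {G : Type*} [Group G] {Λ : Subgroup G} {l : G}
    (hl : l ∈ Λ) : l • ((1 : G) : G ⧸ Λ) = ((1 : G) : G ⧸ Λ) := by
  rw [MulAction.Quotient.smul_mk, smul_eq_mul, mul_one, QuotientGroup.eq]
  simpa using hl

theorem exists_invariant_probabilityMeasure_iff_exists_equivariant_map_general
    {G X : Type*} [Group G] [TopologicalSpace X] [CompactSpace X] [T2Space X]
    [MeasurableSpace X] [BorelSpace X] [MulAction G X] [ContinuousConstSMul G X]
    (Λ : Subgroup G) :
    (∃ ν : Measure X, IsProbabilityMeasure ν ∧ ν.Regular ∧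
        ∀ l ∈ Λ, Measure.map (fun x => l • x) ν = ν) ↔
      (∃ ψ : C(X, ℝ) →ₗ[ℝ] ((G ⧸ Λ) → ℝ),
        ψ 1 = 1 ∧
        (∀ f : C(X, ℝ), (∀ x, 0 ≤ f x) → ∀ q : G ⧸ Λ, 0 ≤ ψ f q) ∧
        (∀ f : C(X, ℝ), ∃ M : ℝ, ∀ q : G ⧸ Λ, |ψ f q| ≤ M) ∧
        (∀ (g : G) (f : C(X, ℝ)) (q : G ⧸ Λ), ψ (smulCont g f) q = ψ f (g⁻¹ • q))) := by
  constructor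
  · rintro ⟨ν, hν, -, hinv⟩
    exact ⟨poissonMap Λ ν, poissonMap_one, fun f hf => poissonMap_nonneg hf,
      fun f => ⟨_, abs_poissonMap_le f⟩, poissonMap_smulCont hinv⟩
  · rintro ⟨ψ, hone, hpos, -, hequiv⟩
    set q₀ : G ⧸ Λ := ((1 : G) : G ⧸ Λ)
    obtain ⟨ν, hprob, hreg, hν⟩ : ∃ ν : Measure X, IsProbabilityMeasure ν ∧ ν.Regular ∧
        ∀ f : C(X, ℝ), ∫ x, f x ∂ν = ψ f q₀ :=
      exists_regular_probabilityMeasure_integral_eq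
        (.mk₀ ((LinearMap.proj q₀ : (G ⧸ Λ → ℝ) →ₗ[ℝ] ℝ) ∘ₗ ψ) fun f hf => hpos f hf q₀)
        (congrFun hone q₀)
    refine ⟨ν, hprob, hreg, fun l hl => map_smul_eq_of_integral_comp_smul_eq fun f => ?_⟩
    calc ∫ x, f (l • x) ∂ν = ψ (smulCont l⁻¹ f) q₀ := by simpa using hν (smulCont l⁻¹ f)
      _ = ψ f q₀ := by rw [hequiv, inv_inv, QuotientGroup.smul_mk_one_of_mem hl]
      _ = ∫ x, f x ∂ν := (hν f).symm

/-- Proposition 3.9: a subgroup `Λ ≤ Γ` fixes a regular Borel probability measure on a compact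
Hausdorff Γ-space `X` iff there is a unital positive Γ-equivariant linear map
`C(X,ℝ) → ℓ∞(Γ/Λ)`. -/
theorem exists_invariant_probabilityMeasure_iff_exists_equivariant_map
    {G X : Type*} [Group G] [TopologicalSpace X] [CompactSpace X] [T2Space X] [Nonempty X]
    [MeasurableSpace X] [BorelSpace X] [MulAction G X] [ContinuousConstSMul G X]
    (Λ : Subgroup G) :
    (∃ ν : Measure X, IsProbabilityMeasure ν ∧ ν.Regular ∧
        ∀ l ∈ Λ, Measure.map (fun x => l • x) ν = ν) ↔
      (∃ ψ : C(X, ℝ) →ₗ[ℝ] ((G ⧸ Λ) → ℝ),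
        ψ 1 = 1 ∧
        (∀ f : C(X, ℝ), (∀ x, 0 ≤ f x) → ∀ q : G ⧸ Λ, 0 ≤ ψ f q) ∧
        (∀ f : C(X, ℝ), ∃ M : ℝ, ∀ q : G ⧸ Λ, |ψ f q| ≤ M) ∧
        (∀ (g : G) (f : C(X, ℝ)) (q : G ⧸ Λ), ψ (smulCont g f) q = ψ f (g⁻¹ • q))) :=
  exists_invariant_probabilityMeasure_iff_exists_equivariant_map_general Λ
end

section
/- Let Γ be a group acting by homeomorphisms on a nonempty compact Hausdorff space X (with its Borel σ-algebra), and suppose the action is minimal, strongly proximal, and faithful. If N is a nontrivial normal subgroup of Γ, then there is no N-invariant Borel probability measure on X. (This is the measure-theoretic form of Proposition 3.12: the class of subgroups fixing a probability measure on a faithful Γ-boundary contains no nontrivial normal subgroup of Γ.) -/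
open MeasureTheory

/-- Pushforward of a probability measure under the action of a group element. -/
noncomputable def pushForwardPM {G X : Type*} [Group G] [TopologicalSpace X]
    [MeasurableSpace X] [BorelSpace X] [MulAction G X] [ContinuousConstSMul G X]
    (g : G) (ν : ProbabilityMeasure X) : ProbabilityMeasure X :=
  ν.map (f := fun x => g • x) (continuous_const_smul g).measurable.aemeasurable

/-- The action `Γ ↷ X` is strongly proximal: the weak*-closure of the orbit of any Borel
probability measure contains a Dirac measure. -/
def IsStronglyProximal (G : Type*) {X : Type*} [Group G] [TopologicalSpace X]
    [MeasurableSpace X] [BorelSpace X] [MulAction G X] [ContinuousConstSMul G X] : Prop :=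
  ∀ ν : ProbabilityMeasure X, ∃ x : X,
    (⟨Measure.dirac x, inferInstance⟩ : ProbabilityMeasure X) ∈
      closure {μ : ProbabilityMeasure X | ∃ g : G, μ = pushForwardPM g ν}

lemma pushForwardPM_toMeasure {G X : Type*} [Group G] [TopologicalSpace X]
    [MeasurableSpace X] [BorelSpace X] [MulAction G X] [ContinuousConstSMul G X]
    (g : G) (ν : ProbabilityMeasure X) :
    (pushForwardPM g ν).toMeasure = Measure.map (fun x => g • x) ν.toMeasure := by
  simp [pushForwardPM]

/-- Proposition 3.12 (measure-theoretic form): for a faithful boundary action, no nontrivial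
normal subgroup fixes a Borel probability measure. -/
theorem no_invariant_measure_of_nontrivial_normal_subgroup
    {G X : Type*} [Group G] [TopologicalSpace X] [CompactSpace X] [T2Space X] [Nonempty X]
    [MeasurableSpace X] [BorelSpace X] [MulAction G X] [ContinuousConstSMul G X]
    (hmin : ∀ C : Set X, IsClosed C → (∀ g : G, ∀ x ∈ C, g • x ∈ C) →
      C = ∅ ∨ C = Set.univ)
    (hprox : IsStronglyProximal G (X := X))
    (hfaithful : ∀ g : G, g ≠ 1 → ∃ x : X, g • x ≠ x)
    (N : Subgroup G) (hN : N.Normal) (hNnontriv : N ≠ ⊥) :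
    ¬ ∃ ν : Measure X, IsProbabilityMeasure ν ∧
        ∀ n ∈ N, Measure.map (fun x => n • x) ν = ν := by
  rintro ⟨ν, hνprob, hνinv⟩
  set νp : ProbabilityMeasure X := ⟨ν, hνprob⟩ with hνp
  have hmble : ∀ h : G, Measurable (fun x : X => h • x) :=
    fun h => (continuous_const_smul h).measurable
  -- each measure in the orbit of νp is N-invariant (at the level of measures)
  have hinv : ∀ n ∈ N, ∀ g : G,
      Measure.map (fun x : X => n • x) ((pushForwardPM g νp : ProbabilityMeasure X) : Measure X)
        = ((pushForwardPM g νp : ProbabilityMeasure X) : Measure X) := by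
    intro n hn g
    rw [pushForwardPM_toMeasure, Measure.map_map (hmble n) (hmble g)]
    have hcomp : ((fun x : X => n • x) ∘ fun x : X => g • x)
        = (fun x : X => g • x) ∘ (fun x : X => (g⁻¹ * n * g) • x) := by
      funext x
      simp only [Function.comp, smul_smul]
      congr 1
      group
    rw [hcomp, ← Measure.map_map (hmble g) (hmble (g⁻¹ * n * g))]
    have hmem : g⁻¹ * n * g ∈ N := by
      simpa using (Subgroup.Normal.conj_mem hN n hn g⁻¹)
    simp only [hνp, ProbabilityMeasure.coe_mk] at *
    rw [hνinv _ hmem]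
  obtain ⟨x, hx⟩ := hprox νp
  -- the dirac point x is fixed by N
  have hfix : ∀ n ∈ N, n • x = x := by
    intro n hn
    by_contra hne
    -- Urysohn: separate x from n • x
    obtain ⟨f, hf0, hf1, -⟩ := exists_continuous_zero_one_of_isClosed
      (isClosed_singleton (x := x)) (isClosed_singleton (x := n • x))
      (by simpa [Set.disjoint_singleton] using (Ne.symm hne))
    set fb : BoundedContinuousFunction X ℝ := BoundedContinuousFunction.mkOfCompact f with hfb
    set gb : BoundedContinuousFunction X ℝ :=
      fb.compContinuous ⟨fun y : X => n • y, continuous_const_smul n⟩ with hgb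
    -- the set of measures where ∫ f∘(n•) = ∫ f is closed and contains the orbit
    set T : Set (ProbabilityMeasure X) :=
      {μ : ProbabilityMeasure X |
        (∫ y, gb y ∂(μ : Measure X)) = ∫ y, fb y ∂(μ : Measure X)} with hT
    have hTclosed : IsClosed T :=
      isClosed_eq (ProbabilityMeasure.continuous_integral_boundedContinuousFunction gb)
        (ProbabilityMeasure.continuous_integral_boundedContinuousFunction fb)
    have horbit : {μ : ProbabilityMeasure X | ∃ g : G, μ = pushForwardPM g νp} ⊆ T := by
      rintro μ ⟨g, rfl⟩
      show (∫ y, gb y ∂_) = ∫ y, fb y ∂_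
      have : (∫ y, gb y ∂((pushForwardPM g νp : ProbabilityMeasure X) : Measure X))
          = ∫ y, fb y ∂(Measure.map (fun x : X => n • x)
              ((pushForwardPM g νp : ProbabilityMeasure X) : Measure X)) := by
        rw [integral_map (hmble n).aemeasurable fb.continuous.aestronglyMeasurable]
        rfl
      rw [this, hinv n hn g]
    have hmemT : (⟨Measure.dirac x, inferInstance⟩ : ProbabilityMeasure X) ∈ T :=
      closure_minimal horbit hTclosed hx
    have : gb x = fb x := by
      have h : (∫ y, gb y ∂(Measure.dirac x)) = ∫ y, fb y ∂(Measure.dirac x) := hmemT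
      rwa [integral_dirac, integral_dirac] at h
    have h1 : fb (n • x) = 1 := by
      simpa [hfb] using hf1 (Set.mem_singleton (n • x))
    have h0 : fb x = 0 := by
      simpa [hfb] using hf0 (Set.mem_singleton x)
    have hgx : gb x = fb (n • x) := rfl
    rw [hgx, h1, h0] at this
    exact one_ne_zero this
  -- the fixed-point set of N is closed, nonempty, Γ-invariant
  set C : Set X := {y : X | ∀ n ∈ N, n • y = y} with hC
  have hCclosed : IsClosed C := by
    have : C = ⋂ n ∈ N, {y : X | n • y = y} := by ext y; simp [hC]
    rw [this]
    exact isClosed_biInter fun n _ =>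
      isClosed_eq (continuous_const_smul n) continuous_id
  have hCinv : ∀ g : G, ∀ y ∈ C, g • y ∈ C := by
    intro g y hy n hn
    have hmem : g⁻¹ * n * g ∈ N := by
      simpa using (Subgroup.Normal.conj_mem hN n hn g⁻¹)
    have h' := hy _ hmem
    calc n • g • y = g • (g⁻¹ * n * g) • y := by
          simp only [smul_smul]; congr 1; group
      _ = g • y := by rw [h']
  have hCuniv : C = Set.univ := by
    rcases hmin C hCclosed hCinv with h | h
    · exact absurd (h ▸ hfix : x ∈ (∅ : Set X)) (Set.notMem_empty x)
    · exact h
  -- contradiction with faithfulness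
  obtain ⟨n, hnN, hn1⟩ : ∃ n : G, n ∈ N ∧ n ≠ 1 := by
    by_contra h
    push_neg at h
    exact hNnontriv (Subgroup.ext fun g => by
      simp only [Subgroup.mem_bot]
      exact ⟨fun hg => h g hg, fun hg => hg ▸ N.one_mem⟩)
  obtain ⟨y, hy⟩ := hfaithful n hn1
  exact hy ((hCuniv ▸ Set.mem_univ y : y ∈ C) n hnN)
end

section
/- Let Γ be a group acting by homeomorphisms on a nonempty compact Hausdorff space X (with its Borel σ-algebra), suppose the action is strongly proximal, and let N be a normal subgroup of Γ. If there exists an N-invariant Borel probability measure on X, then N has a fixed point in X, i.e. there exists x ∈ X with n·x = x for all n ∈ N. (Key step in the proof of Proposition 3.12: the set of N-invariant probability measures is closed, Γ-invariant by normality, and by strong proximality contains a Dirac measure.) -/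
/-!
The `N`-invariant probability measures form a weak-* closed set, and by normality of `N` it is
stable under pushforward by `G`. Strong proximality puts a Dirac measure `δ_x` in the closure of
the `G`-orbit of an `N`-invariant measure, so `δ_x` is `N`-invariant, i.e. `x` is fixed by `N`.
Invariance is tested against bounded continuous functions only: on a non-metrizable compact space
these need not determine a Borel measure, but they do separate the points.
-/

open MeasureTheory

open BoundedContinuousFunction

theorem eq_of_forall_boundedContinuousFunction_apply_eq {X : Type*} [TopologicalSpace X]
    [CompletelyRegularSpace X] [T0Space X] {x y : X} (h : ∀ f : X →ᵇ ℝ, f x = f y) : x = y := by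
  by_contra hxy
  obtain ⟨f, hfx, hfy⟩ :=
    CompletelyRegularSpace.exists_BCNN isClosed_singleton (Set.notMem_singleton_iff.2 hxy)
  have hf := h (f.comp _ (LipschitzWith.subtype_val _))
  change (f x : ℝ) = f y at hf
  rw [hfx, hfy y rfl] at hf
  exact one_ne_zero (NNReal.coe_injective hf)

section Action

variable {G X : Type*} [Group G] [TopologicalSpace X] [MeasurableSpace X] [BorelSpace X]
  [MulAction G X] [ContinuousConstSMul G X]

theorem map_smul_map_smul_eq_of_normal {N : Subgroup G} (hN : N.Normal) {ν : Measure X}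
    (hν : ∀ n ∈ N, ν.map (n • ·) = ν) (g : G) {n : G} (hn : n ∈ N) :
    (ν.map (g • ·)).map (n • ·) = ν.map (g • ·) := by
  have hmeas (a : G) : Measurable (a • · : X → X) := (continuous_const_smul a).measurable
  have hconj : (n • ·) ∘ (g • ·) = (g • ·) ∘ ((g⁻¹ * n * g) • · : X → X) := by
    funext y
    simp [smul_smul, mul_assoc]
  rw [Measure.map_map (hmeas n) (hmeas g), hconj, ← Measure.map_map (hmeas g) (hmeas _),
    hν _ (hN.conj_mem' n hn g)]

theorem integral_comp_smul_eq_of_map_smul_eq {μ : Measure X} {n : G}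
    (hμ : μ.map (n • ·) = μ) (f : X →ᵇ ℝ) : ∫ x, f (n • x) ∂μ = ∫ x, f x ∂μ := by
  rw [← integral_map (continuous_const_smul n).aemeasurable
    f.continuous.aestronglyMeasurable, hμ]

theorem isClosed_setOf_forall_integral_comp_smul_eq (s : Set G) :
    IsClosed {μ : ProbabilityMeasure X | ∀ n ∈ s, ∀ f : X →ᵇ ℝ,
      ∫ x, f (n • x) ∂μ = ∫ x, f x ∂μ} := by
  simp only [Set.ofPred_forall]
  refine isClosed_biInter fun n _ => isClosed_iInter fun f => isClosed_eq ?_ ?_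
  · exact ProbabilityMeasure.continuous_integral_boundedContinuousFunction
      (f.compContinuous ⟨(n • ·), continuous_const_smul n⟩)
  · exact ProbabilityMeasure.continuous_integral_boundedContinuousFunction f

end Action

theorem exists_fixed_point_of_invariant_measure_of_stronglyProximal_general
    {G X : Type*} [Group G] [TopologicalSpace X] [CompactSpace X] [T2Space X]
    [MeasurableSpace X] [BorelSpace X] [MulAction G X] [ContinuousConstSMul G X]
    (hprox : IsStronglyProximal G (X := X))
    (N : Subgroup G) (hN : N.Normal)
    (h : ∃ ν : Measure X, IsProbabilityMeasure ν ∧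
        ∀ n ∈ N, Measure.map (fun x => n • x) ν = ν) :
    ∃ x : X, ∀ n ∈ N, n • x = x := by
  obtain ⟨ν, hν, hνinv⟩ := h
  obtain ⟨x, hx⟩ := hprox ⟨ν, hν⟩
  have horbit : {μ : ProbabilityMeasure X | ∃ g : G, μ = pushForwardPM g ⟨ν, hν⟩} ⊆
      {μ | ∀ n ∈ (N : Set G), ∀ f : X →ᵇ ℝ, ∫ y, f (n • y) ∂μ = ∫ y, f y ∂μ} := by
    rintro _ ⟨g, rfl⟩ n hn
    exact integral_comp_smul_eq_of_map_smul_eq (map_smul_map_smul_eq_of_normal hN hνinv g hn)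
  have hdirac := closure_minimal horbit (isClosed_setOf_forall_integral_comp_smul_eq _) hx
  refine ⟨x, fun n hn => eq_of_forall_boundedContinuousFunction_apply_eq fun f => ?_⟩
  simpa using hdirac n hn f

/-- Key step in Proposition 3.12: for a strongly proximal action and a normal subgroup `N`,
an `N`-invariant Borel probability measure yields a common fixed point for `N`. -/
theorem exists_fixed_point_of_invariant_measure_of_stronglyProximal
    {G X : Type*} [Group G] [TopologicalSpace X] [CompactSpace X] [T2Space X] [Nonempty X]
    [MeasurableSpace X] [BorelSpace X] [MulAction G X] [ContinuousConstSMul G X]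
    (hprox : IsStronglyProximal G (X := X))
    (N : Subgroup G) (hN : N.Normal)
    (h : ∃ ν : Measure X, IsProbabilityMeasure ν ∧
        ∀ n ∈ N, Measure.map (fun x => n • x) ν = ν) :
    ∃ x : X, ∀ n ∈ N, n • x = x :=
  exists_fixed_point_of_invariant_measure_of_stronglyProximal_general hprox N hN h
end

section
/- Let Γ be a group acting on a set Ω, and for g ∈ Γ let supp(g) := {ω ∈ Ω : g·ω ≠ ω}. Then for g, h ∈ Γ, the sets supp(g) and supp(h) are disjoint if and only if for every function ξ : Ω → ℂ and every ω ∈ Ω one has ξ((g·h)⁻¹·ω) = ξ(g⁻¹·ω) + ξ(h⁻¹·ω) − ξ(ω). (Proposition 6.2 of Haagerup–Olesen type: in terms of the permutation representation λ of Γ on functions on Ω given by (λ(g)ξ)(ω) = ξ(g⁻¹·ω), the identity reads λ(gh) = λ(g) + λ(h) − 1, and it holds on ℓ²(Ω) iff it holds on all of ℂ^Ω.) -/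
/-- Proposition 6.2 (Haagerup–Olesen type): `supp g` and `supp h` are disjoint iff the
permutation-representation identity `λ(gh) = λ(g) + λ(h) − 1` holds on all functions. -/
theorem disjoint_support_iff_permutation_identity
    {G Ω : Type*} [Group G] [MulAction G Ω] (g h : G) :
    Disjoint {ω : Ω | g • ω ≠ ω} {ω : Ω | h • ω ≠ ω} ↔
      ∀ (ξ : Ω → ℂ) (ω : Ω),
        ξ ((g * h)⁻¹ • ω) = ξ (g⁻¹ • ω) + ξ (h⁻¹ • ω) - ξ ω := by
  constructor
  · intro hdisj ξ ω
    rw [Set.disjoint_left] at hdisj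
    have key : ∀ ω : Ω, g • ω = ω ∨ h • ω = ω := by
      intro x
      by_cases hx : g • x = x
      · exact Or.inl hx
      · exact Or.inr (by by_contra hc; exact hdisj hx hc)
    have hgh : (g * h)⁻¹ • ω = h⁻¹ • (g⁻¹ • ω) := by
      rw [mul_inv_rev, mul_smul]
    rw [hgh]
    rcases key ω with hgω | hhω
    · -- g fixes ω, so g⁻¹ • ω = ω
      have : g⁻¹ • ω = ω := by
        conv_lhs => rw [← hgω]
        rw [inv_smul_smul]
      rw [this]; ring
    · -- h fixes ω
      have hinvω : h⁻¹ • ω = ω := by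
        conv_lhs => rw [← hhω]
        rw [inv_smul_smul]
      by_cases hg : g • ω = ω
      · have : g⁻¹ • ω = ω := by
          conv_lhs => rw [← hg]
          rw [inv_smul_smul]
        rw [this, hinvω]; ring
      · -- g does not fix ω, hence g does not fix g⁻¹ • ω, so h fixes g⁻¹ • ω
        have hg' : ¬ g • (g⁻¹ • ω) = g⁻¹ • ω := by
          rw [smul_inv_smul]
          intro hc
          apply hg
          conv_lhs => rw [hc]
          rw [smul_inv_smul]
        have hh' : h • (g⁻¹ • ω) = g⁻¹ • ω := (key _).resolve_left hg'
        have : h⁻¹ • (g⁻¹ • ω) = g⁻¹ • ω := by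
          conv_lhs => rw [← hh']
          rw [inv_smul_smul]
        rw [this, hinvω]; ring
  · intro hid
    rw [Set.disjoint_left]
    intro ω hgω hhω
    simp only [Set.mem_setOf_eq] at hgω hhω
    classical
    have := hid (fun x => if x = ω then 1 else 0) (g • ω)
    have e1 : g⁻¹ • (g • ω) = ω := by rw [inv_smul_smul]
    have e2 : (g * h)⁻¹ • (g • ω) = h⁻¹ • ω := by
      rw [mul_inv_rev, mul_smul, e1]
    rw [e1, e2] at this
    have hne1 : h⁻¹ • ω ≠ ω := fun hc => hhω (by conv_lhs => rw [← hc]; rw [smul_inv_smul])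
    have hne2 : g • ω ≠ ω := hgω
    simp only [if_pos rfl, if_neg hne1, if_neg hne2] at this
    -- this : 0 = 1 + (if h⁻¹ • (g • ω) = ω then 1 else 0) - 0
    by_cases hc : h⁻¹ • (g • ω) = ω <;> simp [hc] at this <;> norm_num at this
end

section
/- Let Γ be a group acting by homeomorphisms on a compact Hausdorff space X, let x ∈ X, and let H be a subgroup of Γ with Γ_x⁰ ≤ H ≤ Γ_x. For f ∈ C(X,ℂ), the function kH ↦ f(k·x) is well defined on Γ/H (since H ≤ Γ_x). Then for every g ∈ Γ and every continuous f : X → ℂ whose support (the closure of {f ≠ 0}) is contained in X^g, one has, for every function η : Γ/H → ℂ and every k ∈ Γ: f((g⁻¹k)·x)·η(g⁻¹kH) = f(k·x)·η(kH). (Proposition 4.2(ii): in operator terms, λ_{Γ/H}(g) P_x(f) = P_x(f), where P_x(f) is the multiplication operator (P_x(f)η)(kH) = f(k·x)η(kH) and (λ_{Γ/H}(g)η)(kH) = η(g⁻¹kH); i.e. the quasi-regular representation together with the Poisson map is a germinal representation of (Γ,X).) -/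
/-- Proposition 4.2(ii): for `Γ_x⁰ ≤ H ≤ Γ_x` and `f ∈ C(X)` with `supp f ⊆ X^g`, the
quasi-regular representation together with the Poisson map satisfies
`λ_{Γ/H}(g) P_x(f) = P_x(f)`, stated pointwise. -/
theorem quasiRegular_poisson_germinal
    {G X : Type*} [Group G] [TopologicalSpace X] [CompactSpace X] [T2Space X]
    [MulAction G X] [ContinuousConstSMul G X]
    (x : X) (H : Subgroup G)
    (hlow : {γ : G | x ∈ interior {y : X | γ • y = y}} ⊆ (H : Set G))
    (hup : (H : Set G) ⊆ {γ : G | γ • x = x})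
    (g : G) (f : C(X, ℂ)) (hf : tsupport f ⊆ {y : X | g • y = y}) :
    ∀ (η : G ⧸ H → ℂ) (k : G),
      f ((g⁻¹ * k) • x) * η (QuotientGroup.mk (g⁻¹ * k)) =
        f (k • x) * η (QuotientGroup.mk k) := by
  intro η k
  have hopen : IsOpen {y : X | f y ≠ 0} := (isOpen_compl_iff.mpr isClosed_singleton).preimage f.continuous
  have hsub : {y : X | f y ≠ 0} ⊆ interior {y : X | g • y = y} :=
    interior_maximal (fun y hy => hf (subset_tsupport f hy)) hopen
  by_cases h : f (k • x) = 0
  · -- show LHS is zero too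
    have h2 : f ((g⁻¹ * k) • x) = 0 := by
      by_contra hne
      have hmem : (g⁻¹ * k) • x ∈ {y : X | g • y = y} :=
        interior_subset (hsub hne)
      have h3 : g • ((g⁻¹ * k) • x) = (g⁻¹ * k) • x := hmem
      rw [smul_smul, ← mul_assoc, mul_inv_cancel, one_mul] at h3
      rw [h3] at h
      exact hne h
    rw [h, h2, zero_mul, zero_mul]
  · have hmemInt : k • x ∈ interior {y : X | g • y = y} := hsub h
    have hmem : k • x ∈ {y : X | g • y = y} := interior_subset hmemInt
    have hmem : g • (k • x) = k • x := hmem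
    have hx : (g⁻¹ * k) • x = k • x := by
      rw [mul_smul]
      rw [← hmem]
      rw [inv_smul_smul, hmem]
    have hH : k⁻¹ * g * k ∈ H := by
      apply hlow
      show x ∈ interior {y : X | (k⁻¹ * g * k) • y = y}
      have hsubset : (fun y : X => k⁻¹ • y) '' (interior {y : X | g • y = y})
          ⊆ {y : X | (k⁻¹ * g * k) • y = y} := by
        rintro _ ⟨z, hz, rfl⟩
        have hzfix : z ∈ {y : X | g • y = y} := interior_subset hz
        have hzfix : g • z = z := hzfix
        show (k⁻¹ * g * k) • k⁻¹ • z = k⁻¹ • z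
        rw [smul_smul, mul_assoc, mul_inv_cancel, mul_one, mul_smul, hzfix]
      have hopen' : IsOpen ((fun y : X => k⁻¹ • y) '' (interior {y : X | g • y = y})) := by
        have := (Homeomorph.smul (k⁻¹ : G) (α := X)).isOpenMap
        exact this _ isOpen_interior
      have hxmem : x ∈ (fun y : X => k⁻¹ • y) '' (interior {y : X | g • y = y}) :=
        ⟨k • x, hmemInt, by simp⟩
      exact interior_maximal hsubset hopen' hxmem
    have hcoset : (QuotientGroup.mk (g⁻¹ * k) : G ⧸ H) = QuotientGroup.mk k := by
      rw [QuotientGroup.eq]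
      simpa [mul_assoc] using hH
    rw [hx, hcoset]
end

section
/- Let A and B be unital C*-algebras, G a group, u : G → A a group homomorphism into the unitary group of A such that the closed linear span of {u(g) : g ∈ G} is all of A, and β : G → Aut(B) a group homomorphism into the *-automorphisms of B. Let ψ : A → B be a continuous positive linear map (a ≥ 0 implies ψ(a) ≥ 0) which is G-equivariant in the sense that ψ(u(g) a u(g)*) = β(g)(ψ(a)) for all g ∈ G and a ∈ A. Then I_ψ := {a ∈ A : ψ(a* a) = 0} is a closed two-sided ideal of A. (This is the abstract content of the first assertion of Proposition 3.1, applied there with A = C*_π(Γ), the action by inner automorphisms g·a = π(g) a π(g)⁻¹, and ψ a boundary map into B = C(∂_F Γ).) -/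
/-!
`(a + b)⋆(a + b) ≤ 2 (a⋆a + b⋆b)` and `(ab)⋆(ab) ≤ ‖a⋆a‖ b⋆b`, pushed through the positive map `ψ`,
make `I_ψ` a left ideal; it is closed because positive maps between C⋆-algebras are
automatically bounded. For a right ideal, `(b u)⋆(b u) = u⋆ (b⋆b) u` and equivariance give
`b u(g) ∈ I_ψ` for `b ∈ I_ψ`; as `{x | b x ∈ I_ψ}` is a closed subspace, density of the span of the
`u(g)` gives `b A ⊆ I_ψ`.
-/

section StarOrderedRing

variable {R : Type*} [NonUnitalRing R] [StarRing R] [PartialOrder R] [StarOrderedRing R]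

theorem star_add_mul_self_le (a b : R) :
    star (a + b) * (a + b) ≤ (star a * a + star b * b) + (star a * a + star b * b) := by
  rw [← sub_nonneg]
  convert star_mul_self_nonneg (a - b) using 1
  simp only [star_add, star_sub]
  noncomm_ring

end StarOrderedRing

theorem Submodule.mul_mem_of_dense_span {𝕜 A : Type*} [CommSemiring 𝕜] [Ring A] [Algebra 𝕜 A]
    [TopologicalSpace A] [IsTopologicalRing A] [ContinuousConstSMul 𝕜 A]
    {I : Submodule A A} (hI : IsClosed (I : Set A)) {s : Set A}
    (hs : (span 𝕜 s).topologicalClosure = ⊤) {b : A} (hb : ∀ x ∈ s, b * x ∈ I) (a : A) :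
    b * a ∈ I := by
  let J : Submodule 𝕜 A := (I.restrictScalars 𝕜).comap (LinearMap.mulLeft 𝕜 b)
  have hJ : IsClosed (J : Set A) := hI.preimage (continuous_const_mul b)
  have hJ_top : ⊤ ≤ J := hs ▸ topologicalClosure_minimal _ (span_le.mpr hb) hJ
  exact hJ_top mem_top

namespace PositiveLinearMap

variable {A B : Type*}

section NonUnital

variable [NonUnitalCStarAlgebra A] [PartialOrder A] [StarOrderedRing A]
  [AddCommGroup B] [PartialOrder B] [Module ℂ B] (f : A →ₚ[ℂ] B)

theorem map_star_add_mul_self_eq_zero {a b : A} (ha : f (star a * a) = 0)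
    (hb : f (star b * b) = 0) : f (star (a + b) * (a + b)) = 0 :=
  le_antisymm (by simpa [ha, hb] using OrderHomClass.mono f (star_add_mul_self_le a b))
    (f.map_nonneg (star_mul_self_nonneg _))

theorem map_star_mul_mul_self_eq_zero (a : A) {b : A} (hb : f (star b * b) = 0) :
    f (star (a * b) * (a * b)) = 0 := by
  have hle : star (a * b) * (a * b) ≤ ‖star a * a‖ • (star b * b) := by
    simpa [star_mul, mul_assoc] using
      CStarAlgebra.star_left_conjugate_le_norm_smul (a := b) (b := star a * a)
  refine le_antisymm ?_ (f.map_nonneg (star_mul_self_nonneg _))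
  simpa [← Complex.coe_smul, hb] using OrderHomClass.mono f hle

end NonUnital

section Unital

variable [CStarAlgebra A] [PartialOrder A] [StarOrderedRing A]

def nullLeftIdeal [AddCommGroup B] [PartialOrder B] [Module ℂ B]
    (f : A →ₚ[ℂ] B) : Submodule A A where
  carrier := {a | f (star a * a) = 0}
  add_mem' := f.map_star_add_mul_self_eq_zero
  zero_mem' := by simp
  smul_mem' a _ hb := f.map_star_mul_mul_self_eq_zero a hb

theorem mul_mem_nullLeftIdeal [AddCommGroup B] [PartialOrder B] [Module ℂ B] (f : A →ₚ[ℂ] B) {b x : A} (hb : b ∈ f.nullLeftIdeal)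
    (hx : ∀ c, f c = 0 → f (star x * c * x) = 0) : b * x ∈ f.nullLeftIdeal := by
  change f (star (b * x) * (b * x)) = 0
  simpa [star_mul, mul_assoc] using hx _ hb

theorem isClosed_nullLeftIdeal [NonUnitalCStarAlgebra B] [PartialOrder B] [StarOrderedRing B]
    (f : A →ₚ[ℂ] B) : IsClosed (f.nullLeftIdeal : Set A) :=
  isClosed_singleton.preimage ((map_continuous f).comp (continuous_star.mul continuous_id))

end Unital

end PositiveLinearMap

theorem isClosed_twoSidedIdeal_of_equivariant_positive_map_general
    {G A B : Type*} [Group G]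
    [NormedRing A] [StarRing A] [CStarRing A] [CompleteSpace A]
    [NormedAlgebra ℂ A] [StarModule ℂ A] [PartialOrder A] [StarOrderedRing A]
    [NormedRing B] [StarRing B] [CStarRing B] [CompleteSpace B]
    [NormedAlgebra ℂ B] [StarModule ℂ B] [PartialOrder B] [StarOrderedRing B]
    (u : G →* unitary A)
    (hspan : (Submodule.span ℂ (Set.range fun g => (u g : A))).topologicalClosure = ⊤)
    (β : G →* (B ≃ₐ[ℂ] B))
    (ψ : A →ₗ[ℂ] B)
    (hpos : ∀ a : A, 0 ≤ a → 0 ≤ ψ a)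
    (hequiv : ∀ (g : G) (a : A), ψ ((u g : A) * a * star (u g : A)) = β g (ψ a)) :
    IsClosed {a : A | ψ (star a * a) = 0} ∧
      (0 : A) ∈ {a : A | ψ (star a * a) = 0} ∧
      (∀ a ∈ {a : A | ψ (star a * a) = 0}, ∀ b ∈ {a : A | ψ (star a * a) = 0},
        a + b ∈ {a : A | ψ (star a * a) = 0}) ∧
      (∀ a : A, ∀ b ∈ {a : A | ψ (star a * a) = 0}, a * b ∈ {a : A | ψ (star a * a) = 0}) ∧
      (∀ b ∈ {a : A | ψ (star a * a) = 0}, ∀ a : A, b * a ∈ {a : A | ψ (star a * a) = 0}) := by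
  let _ : CStarAlgebra A := {}
  let _ : CStarAlgebra B := {}
  let f := PositiveLinearMap.mk₀ ψ hpos
  let I := f.nullLeftIdeal
  have hconj (g : G) (c : A) (hc : ψ c = 0) : ψ (star (u g : A) * c * u g) = 0 := by
    have : star (u g : A) * c * u g = u g⁻¹ * c * star (u g⁻¹ : A) := by
      simp [map_inv, ← Unitary.star_eq_inv, Unitary.coe_star]
    rw [this, hequiv, hc, map_zero]
  have hright (b : A) (hb : b ∈ I) (a : A) : b * a ∈ I :=
    I.mul_mem_of_dense_span f.isClosed_nullLeftIdeal hspan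
      (by rintro _ ⟨g, rfl⟩; exact f.mul_mem_nullLeftIdeal hb (hconj g)) a
  exact ⟨f.isClosed_nullLeftIdeal, I.zero_mem, fun _ ha _ hb => I.add_mem ha hb,
    fun a _ hb => I.smul_mem a hb, hright⟩

/-- Abstract content of Proposition 3.1: for a positive continuous linear map `ψ : A → B`
between unital C*-algebras that is equivariant for a unitary representation `u` of `G` on `A`
(with dense span) and an action `β` of `G` on `B` by ⋆-automorphisms, the set
`I_ψ = {a : A | ψ(a*a) = 0}` is a closed two-sided ideal of `A`. -/
theorem isClosed_twoSidedIdeal_of_equivariant_positive_map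
    {G A B : Type*} [Group G]
    [NormedRing A] [StarRing A] [CStarRing A] [CompleteSpace A]
    [NormedAlgebra ℂ A] [StarModule ℂ A] [PartialOrder A] [StarOrderedRing A]
    [NormedRing B] [StarRing B] [CStarRing B] [CompleteSpace B]
    [NormedAlgebra ℂ B] [StarModule ℂ B] [PartialOrder B] [StarOrderedRing B]
    (u : G →* unitary A)
    (hspan : (Submodule.span ℂ (Set.range fun g => (u g : A))).topologicalClosure = ⊤)
    (β : G →* (B ≃ₐ[ℂ] B))
    (hβstar : ∀ (g : G) (b : B), β g (star b) = star (β g b))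
    (ψ : A →ₗ[ℂ] B) (hcont : Continuous ψ)
    (hpos : ∀ a : A, 0 ≤ a → 0 ≤ ψ a)
    (hequiv : ∀ (g : G) (a : A), ψ ((u g : A) * a * star (u g : A)) = β g (ψ a)) :
    IsClosed {a : A | ψ (star a * a) = 0} ∧
      (0 : A) ∈ {a : A | ψ (star a * a) = 0} ∧
      (∀ a ∈ {a : A | ψ (star a * a) = 0}, ∀ b ∈ {a : A | ψ (star a * a) = 0},
        a + b ∈ {a : A | ψ (star a * a) = 0}) ∧
      (∀ a : A, ∀ b ∈ {a : A | ψ (star a * a) = 0}, a * b ∈ {a : A | ψ (star a * a) = 0}) ∧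
      (∀ b ∈ {a : A | ψ (star a * a) = 0}, ∀ a : A, b * a ∈ {a : A | ψ (star a * a) = 0}) :=
  isClosed_twoSidedIdeal_of_equivariant_positive_map_general u hspan β ψ hpos hequiv
end
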